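/- Let d ≥ 1, let Σ be a symmetric positive-definite d×d real matrix, u ∈ ℝᵈ, C > 0, and f(v) = C·exp(−(1/2)·(v − u)·Σ⁻¹·(v − u)). Let β : ℝᵈ → ℝ be continuous, bounded, and strictly positive everywhere. With n_β = ∫ β f dv, p_β = ∫ v β f dv, E_β = ∫ |v|² β f dv, A_β = −∫ β ∇f dv, and B_β = −∫ β (v·∇f) dv, the effective temperature λ_β = (n_β·E_β − |p_β|²)/(n_β·B_β − A_β·p_β) satisfies 0 < λ_β < ∞. -/

import Mathlib

open MeasureTheory
open scoped RealInnerProductSpace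

/-!
Write `ρ = β f`, `n = ∫ ρ`, `p = ∫ ρ v` and let `m = p / n` be the barycentre, so that
`∫ ρ (v - m) = 0`. Since `∇f(v) = -f(v) S⁻¹ (v - u)`, both `A_β` and `B_β` are moments of `ρ`,
and expanding around `m` gives
  `n E_β - |p|² = n ∫ ρ |v - m|²`  and  `n B_β - A_β · p = n ∫ ρ ⟪v - m, S⁻¹ (v - m)⟫`.
Both integrands are positive off the single point `m`, hence both integrals are positive.
All integrals converge because `S⁻¹` is coercive, so `f` has Gaussian decay while `β` is bounded.
-/

theorem integral_pos_of_pos_on_compl_singleton {X : Type*} [TopologicalSpace X] [T1Space X]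
    [Nontrivial X] [MeasurableSpace X] {μ : Measure X} [μ.IsOpenPosMeasure] {g : X → ℝ}
    (hg : Integrable g μ) (hg0 : 0 ≤ g) {m : X} (hgm : ∀ v ≠ m, 0 < g v) :
    0 < ∫ v, g v ∂μ := by
  rw [integral_pos_iff_support_of_nonneg hg0 hg]
  obtain ⟨w, hw⟩ := exists_ne m
  exact (isOpen_compl_singleton.measure_pos μ ⟨w, hw⟩).trans_le
    (measure_mono fun v hv => (hgm v hv).ne')

section Moments

variable {E : Type*} [NormedAddCommGroup E] [InnerProductSpace ℝ E] [MeasurableSpace E]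
  [BorelSpace E] {μ : Measure E} {ρ : E → ℝ}

theorem integrable_mul_inner_apply (hρ : Integrable ρ μ)
    (hρE : Integrable (fun v => ρ v * ‖v‖ ^ 2) μ) (T : E →L[ℝ] E) :
    Integrable (fun v => ρ v * ⟪v, T v⟫) μ := by
  refine (hρE.norm.const_mul ‖T‖).mono' (hρ.aestronglyMeasurable.mul
    (by fun_prop : Continuous fun v => ⟪v, T v⟫).aestronglyMeasurable) (ae_of_all _ fun v => ?_)
  calc ‖ρ v * ⟪v, T v⟫‖ = |ρ v| * |⟪v, T v⟫| := by rw [Real.norm_eq_abs, abs_mul]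
    _ ≤ |ρ v| * (‖T‖ * ‖v‖ ^ 2) := by
      gcongr
      calc |⟪v, T v⟫| ≤ ‖v‖ * ‖T v‖ := abs_real_inner_le_norm _ _
        _ ≤ ‖v‖ * (‖T‖ * ‖v‖) := by gcongr; exact T.le_opNorm v
        _ = ‖T‖ * ‖v‖ ^ 2 := by ring
    _ = ‖T‖ * ‖ρ v * ‖v‖ ^ 2‖ := by rw [norm_mul, Real.norm_eq_abs, norm_pow, norm_norm]; ring

theorem integrable_mul_inner_sub_apply_sub (hρ : Integrable ρ μ)
    (hρv : Integrable (fun v => ρ v • v) μ) (hρE : Integrable (fun v => ρ v * ‖v‖ ^ 2) μ)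
    (T : E →L[ℝ] E) (a b : E) : Integrable (fun v => ρ v * ⟪v - b, T (v - a)⟫) μ := by
  have hexp : (fun v => ρ v * ⟪v - b, T (v - a)⟫) = fun v =>
      ρ v * ⟪v, T v⟫ - ⟪ρ v • v, T a⟫ - ⟪b, T (ρ v • v)⟫ + ρ v * ⟪b, T a⟫ := by
    ext v
    simp only [map_sub, map_smul, inner_sub_left, inner_sub_right, real_inner_smul_left,
      real_inner_smul_right]
    ring
  rw [hexp]
  exact (((integrable_mul_inner_apply hρ hρE T).sub (hρv.inner_const _)).sub
    ((T.integrable_comp hρv).const_inner b)).add (hρ.mul_const _)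

theorem integral_mul_inner_sub_apply_sub_self [CompleteSpace E] (hρ : Integrable ρ μ)
    (hρv : Integrable (fun v => ρ v • v) μ) (hρE : Integrable (fun v => ρ v * ‖v‖ ^ 2) μ)
    (T : E →L[ℝ] E) (a : E) {m : E} (hm : (∫ v, ρ v ∂μ) • m = ∫ v, ρ v • v ∂μ) :
    ∫ v, ρ v * ⟪v - m, T (v - m)⟫ ∂μ =
      ∫ v, ρ v * ⟪v, T (v - a)⟫ ∂μ - ⟪m, ∫ v, ρ v • T (v - a) ∂μ⟫ := by
  have hexp : (fun v => ρ v * ⟪v - m, T (v - m)⟫) = fun v =>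
      ρ v * ⟪v, T (v - a)⟫ - ⟪m, ρ v • T (v - a)⟫ - ⟪T (m - a), ρ v • v⟫
        + ρ v * ⟪m, T (m - a)⟫ := by
    ext v
    simp only [map_sub, inner_sub_left, inner_sub_right, real_inner_smul_right,
      real_inner_comm v (T m), real_inner_comm v (T a)]
    ring
  have hA : Integrable (fun v => ρ v • T (v - a)) μ := by
    simp only [map_sub, smul_sub, ← map_smul]
    exact (T.integrable_comp hρv).sub (T.integrable_comp (hρ.smul_const a))
  have hB : Integrable (fun v => ρ v * ⟪v, T (v - a)⟫) μ := by
    simpa using integrable_mul_inner_sub_apply_sub hρ hρv hρE T a 0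
  rw [hexp, integral_add, integral_sub, integral_sub, integral_inner hA, integral_inner hρv,
    integral_mul_const, ← hm, real_inner_smul_right, real_inner_comm m]
  · ring
  exacts [hB, hA.const_inner m, hB.sub (hA.const_inner m), hρv.const_inner _,
    (hB.sub (hA.const_inner m)).sub (hρv.const_inner _), hρ.mul_const _]

theorem integral_mul_inner_sub_apply_sub_pos [Nontrivial E] [μ.IsOpenPosMeasure]
    (hρ : Integrable ρ μ) (hρv : Integrable (fun v => ρ v • v) μ)
    (hρE : Integrable (fun v => ρ v * ‖v‖ ^ 2) μ) (hρpos : ∀ v, 0 < ρ v)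
    {T : E →L[ℝ] E} (hT : ∀ x ≠ 0, 0 < ⟪x, T x⟫) (m : E) :
    0 < ∫ v, ρ v * ⟪v - m, T (v - m)⟫ ∂μ := by
  have hTm : ∀ v ≠ m, 0 < ρ v * ⟪v - m, T (v - m)⟫ := fun v hv =>
    mul_pos (hρpos v) (hT _ (sub_ne_zero.2 hv))
  refine integral_pos_of_pos_on_compl_singleton
    (integrable_mul_inner_sub_apply_sub hρ hρv hρE T m m) (fun v => ?_) hTm
  rcases eq_or_ne v m with rfl | hv
  · simp
  · exact (hTm v hv).le

theorem moment_ratio_pos [CompleteSpace E] [Nontrivial E] [μ.IsOpenPosMeasure]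
    (hρ : Integrable ρ μ) (hρv : Integrable (fun v => ρ v • v) μ)
    (hρE : Integrable (fun v => ρ v * ‖v‖ ^ 2) μ) (hρpos : ∀ v, 0 < ρ v)
    {T : E →L[ℝ] E} (hT : ∀ x ≠ 0, 0 < ⟪x, T x⟫) (a : E) :
    0 < ((∫ v, ρ v ∂μ) * (∫ v, ‖v‖ ^ 2 * ρ v ∂μ) - ‖∫ v, ρ v • v ∂μ‖ ^ 2) /
      ((∫ v, ρ v ∂μ) * (∫ v, ρ v * ⟪v, T (v - a)⟫ ∂μ) -
        ⟪∫ v, ρ v • T (v - a) ∂μ, ∫ v, ρ v • v ∂μ⟫) := by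
  set n := ∫ v, ρ v ∂μ
  set p := ∫ v, ρ v • v ∂μ
  have hn : 0 < n := integral_pos_of_pos_on_compl_singleton hρ (fun v => (hρpos v).le) (m := 0)
    fun v _ => hρpos v
  set m := n⁻¹ • p
  have hm : n • m = p := smul_inv_smul₀ hn.ne' p
  have key : ∀ (S : E →L[ℝ] E) (b : E), (∀ x ≠ 0, 0 < ⟪x, S x⟫) →
      0 < n * (∫ v, ρ v * ⟪v, S (v - b)⟫ ∂μ) - ⟪∫ v, ρ v • S (v - b) ∂μ, p⟫ := by
    intro S b hS
    have := integral_mul_inner_sub_apply_sub_self hρ hρv hρE S b hm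
    rw [← hm, real_inner_smul_right, real_inner_comm, ← mul_sub, ← this]
    exact mul_pos hn (integral_mul_inner_sub_apply_sub_pos hρ hρv hρE hρpos hS m)
  refine div_pos ?_ (key T a hT)
  -- the numerator is the case `S = id`, `b = 0`
  have hvar := key (ContinuousLinearMap.id ℝ E) 0 fun x hx => by
    simpa [real_inner_self_eq_norm_sq] using pow_pos (norm_pos_iff.2 hx) 2
  simp only [ContinuousLinearMap.id_apply, sub_zero, real_inner_self_eq_norm_sq] at hvar
  rw [← real_inner_self_eq_norm_sq]
  simpa only [mul_comm (‖_‖ ^ 2)] using hvar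

end Moments

theorem one_add_sq_mul_exp_neg_mul_sq_le {c t : ℝ} (hc : 0 < c) (ht : 0 ≤ t) :
    (1 + t) ^ 2 * Real.exp (-c * t ^ 2) ≤ Real.exp (2 / c) * Real.exp (-(c / 2) * t ^ 2) := by
  have hlin : (1 + t) ^ 2 ≤ Real.exp (2 * t) := by
    rw [show 2 * t = t + t by ring, Real.exp_add, ← sq, add_comm]
    exact pow_le_pow_left₀ (by positivity) (Real.add_one_le_exp t) 2
  have hquad : 2 * t - c * t ^ 2 ≤ 2 / c - c / 2 * t ^ 2 := by
    rw [← sub_nonneg]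
    have : 2 / c - c / 2 * t ^ 2 - (2 * t - c * t ^ 2) = (c * t - 2) ^ 2 / (2 * c) := by
      field_simp
      ring
    rw [this]
    positivity
  calc (1 + t) ^ 2 * Real.exp (-c * t ^ 2) ≤ Real.exp (2 * t) * Real.exp (-c * t ^ 2) := by
        gcongr
    _ ≤ Real.exp (2 / c) * Real.exp (-(c / 2) * t ^ 2) := by
        rw [← Real.exp_add, ← Real.exp_add]
        exact Real.exp_le_exp.2 (by linarith)

section QuadraticForm

variable {V : Type*} [NormedAddCommGroup V] [InnerProductSpace ℝ V]

theorem exists_pos_mul_norm_sq_le_inner_apply [FiniteDimensional ℝ V] {T : V →L[ℝ] V}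
    (hT : ∀ x ≠ 0, 0 < ⟪x, T x⟫) : ∃ c > 0, ∀ x, c * ‖x‖ ^ 2 ≤ ⟪x, T x⟫ := by
  rcases subsingleton_or_nontrivial V with hV | hV
  · exact ⟨1, one_pos, fun x => by simp [Subsingleton.elim x 0]⟩
  obtain ⟨x₀, hx₀, hmin⟩ := (isCompact_sphere (0 : V) 1).exists_isMinOn
    (NormedSpace.sphere_nonempty.2 zero_le_one)
    (by fun_prop : Continuous fun x => ⟪x, T x⟫).continuousOn
  rw [mem_sphere_zero_iff_norm] at hx₀
  refine ⟨_, hT x₀ (norm_ne_zero_iff.1 (by simp [hx₀])), fun x => ?_⟩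
  rcases eq_or_ne x 0 with rfl | hx
  · simp
  have hxn : 0 < ‖x‖ := norm_pos_iff.2 hx
  have hy : ‖x‖⁻¹ • x ∈ Metric.sphere (0 : V) 1 := by
    rw [mem_sphere_zero_iff_norm, norm_smul, norm_inv, norm_norm, inv_mul_cancel₀ hxn.ne']
  have := hmin hy
  simp only [Set.mem_ofPred_eq, map_smul, real_inner_smul_left, real_inner_smul_right] at this
  calc ⟪x₀, T x₀⟫ * ‖x‖ ^ 2 ≤ ‖x‖⁻¹ * (‖x‖⁻¹ * ⟪x, T x⟫) * ‖x‖ ^ 2 := by gcongr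
    _ = ⟪x, T x⟫ := by field_simp

theorem exp_neg_half_inner_apply_sub_le {T : V →L[ℝ] V} {c : ℝ} (hc : 0 ≤ c)
    (hT : ∀ x, c * ‖x‖ ^ 2 ≤ ⟪x, T x⟫) (u v : V) :
    Real.exp (-(1 / 2) * ⟪v - u, T (v - u)⟫) ≤
      Real.exp (c / 2 * ‖u‖ ^ 2) * Real.exp (-(c / 4) * ‖v‖ ^ 2) := by
  rw [← Real.exp_add]
  refine Real.exp_le_exp.2 ?_
  have htri : ‖v‖ ≤ ‖v - u‖ + ‖u‖ := norm_le_norm_sub_add v u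
  have := hT (v - u)
  nlinarith [sq_nonneg (‖v - u‖ - ‖u‖), norm_nonneg v, mul_le_mul_of_nonneg_left
    (pow_le_pow_left₀ (norm_nonneg v) htri 2) hc]

theorem hasGradientAt_of_eq_mul_exp_neg_half_inner [CompleteSpace V] {T : V →L[ℝ] V}
    (hT : (T : V →ₗ[ℝ] V).IsSymmetric) {C : ℝ} {u : V} {f : V → ℝ}
    (hf : ∀ v, f v = C * Real.exp (-(1 / 2) * ⟪v - u, T (v - u)⟫)) (v : V) :
    HasGradientAt f (-f v • T (v - u)) v := by
  obtain rfl : f = _ := funext hf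
  have hsub : HasFDerivAt (fun x : V => x - u) (ContinuousLinearMap.id ℝ V) v :=
    (hasFDerivAt_id v).sub_const u
  have hq := hsub.inner ℝ (T.hasFDerivAt.comp v hsub)
  rw [hasGradientAt_iff_hasFDerivAt]
  refine ((hq.const_mul (-(1 / 2))).exp.const_mul C).congr_fderiv ?_
  ext h
  simp only [InnerProductSpace.toDual_apply_apply, smul_apply,
    ContinuousLinearMap.comp_apply, ContinuousLinearMap.prod_apply, ContinuousLinearMap.coe_id',
    id_eq, fderivInnerCLM_apply, smul_eq_mul, real_inner_smul_left, Function.comp_apply]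
  have hsymm : ⟪v - u, T h⟫ = ⟪T (v - u), h⟫ := (hT (v - u) h).symm
  rw [hsymm, real_inner_comm (T (v - u)) h]
  ring

end QuadraticForm

section Gaussian

variable {V : Type*} [NormedAddCommGroup V] [InnerProductSpace ℝ V] [FiniteDimensional ℝ V]
  [MeasurableSpace V] [BorelSpace V]

theorem integrable_exp_neg_mul_sq_norm {b : ℝ} (hb : 0 < b) :
    Integrable (fun v : V => Real.exp (-b * ‖v‖ ^ 2)) :=
  Integrable.of_integral_ne_zero <| by
    rw [GaussianFourier.integral_rexp_neg_mul_sq_norm hb]; positivity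

theorem integrable_smul_of_abs_le_exp_neg_mul_sq_norm {F : Type*} [NormedAddCommGroup F]
    [NormedSpace ℝ F] {ρ : V → ℝ} {G : V → F} (hρ : AEStronglyMeasurable ρ)
    (hG : AEStronglyMeasurable G) {K c : ℝ} (hc : 0 < c)
    (hρK : ∀ v, |ρ v| ≤ K * Real.exp (-c * ‖v‖ ^ 2)) (hGv : ∀ v, ‖G v‖ ≤ (1 + ‖v‖) ^ 2) :
    Integrable (fun v => ρ v • G v) := by
  refine ((integrable_exp_neg_mul_sq_norm (V := V) (half_pos hc)).const_mul
    (K * Real.exp (2 / c))).mono' (hρ.smul hG) (ae_of_all _ fun v => ?_)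
  have hK : 0 ≤ K := nonneg_of_mul_nonneg_left ((abs_nonneg _).trans (hρK v)) (Real.exp_pos _)
  calc ‖ρ v • G v‖ = |ρ v| * ‖G v‖ := by rw [norm_smul, Real.norm_eq_abs]
    _ ≤ K * Real.exp (-c * ‖v‖ ^ 2) * (1 + ‖v‖) ^ 2 := by
        gcongr
        exacts [hρK v, hGv v]
    _ = K * ((1 + ‖v‖) ^ 2 * Real.exp (-c * ‖v‖ ^ 2)) := by ring
    _ ≤ K * (Real.exp (2 / c) * Real.exp (-(c / 2) * ‖v‖ ^ 2)) :=
        mul_le_mul_of_nonneg_left (one_add_sq_mul_exp_neg_mul_sq_le hc (norm_nonneg v)) hK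
    _ = K * Real.exp (2 / c) * Real.exp (-(c / 2) * ‖v‖ ^ 2) := by ring

theorem integrable_mul_smul_of_eq_mul_exp_neg_half_inner {F : Type*} [NormedAddCommGroup F]
    [NormedSpace ℝ F] {T : V →L[ℝ] V} (hT : ∀ x ≠ 0, 0 < ⟪x, T x⟫) {C : ℝ} {u : V}
    {f : V → ℝ} (hf : ∀ v, f v = C * Real.exp (-(1 / 2) * ⟪v - u, T (v - u)⟫)) {β : V → ℝ}
    (hβc : Continuous β) (hβb : ∃ M, ∀ v, |β v| ≤ M) {G : V → F} (hG : Continuous G)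
    (hGv : ∀ v, ‖G v‖ ≤ (1 + ‖v‖) ^ 2) :
    Integrable (fun v => (β v * f v) • G v) := by
  obtain ⟨c, hc, hcT⟩ := exists_pos_mul_norm_sq_le_inner_apply hT
  obtain ⟨M, hM⟩ := hβb
  obtain rfl : f = _ := funext hf
  have hρ : Continuous fun v => β v * (C * Real.exp (-(1 / 2) * ⟪v - u, T (v - u)⟫)) := by
    fun_prop
  refine integrable_smul_of_abs_le_exp_neg_mul_sq_norm (K := M * (|C| * Real.exp (c / 2 * ‖u‖ ^ 2)))
    hρ.aestronglyMeasurable hG.aestronglyMeasurable (by positivity : 0 < c / 4) (fun v => ?_) hGv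
  rw [abs_mul, abs_mul, Real.abs_exp, mul_assoc, mul_assoc]
  exact mul_le_mul (hM v) (mul_le_mul_of_nonneg_left
    (exp_neg_half_inner_apply_sub_le hc.le hcT u v) (abs_nonneg C)) (by positivity)
    ((abs_nonneg _).trans (hM v))

end Gaussian

section Gradient

variable {V : Type*} [NormedAddCommGroup V] [InnerProductSpace ℝ V] [CompleteSpace V]
  [MeasurableSpace V] {μ : Measure V} {f β : V → ℝ} {w : V → V}

theorem neg_integral_smul_gradient_eq (hgrad : ∀ v, gradient f v = -f v • w v) :
    -∫ v, β v • gradient f v ∂μ = ∫ v, (β v * f v) • w v ∂μ := by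
  rw [← integral_neg]
  congr 1
  funext v
  rw [hgrad, smul_smul, mul_neg, neg_smul, neg_neg]

theorem neg_integral_mul_inner_gradient_eq (hgrad : ∀ v, gradient f v = -f v • w v) :
    -∫ v, β v * ⟪v, gradient f v⟫ ∂μ = ∫ v, β v * f v * ⟪v, w v⟫ ∂μ := by
  rw [← integral_neg]
  congr 1
  funext v
  rw [hgrad, real_inner_smul_right]
  ring

end Gradient

theorem Matrix.PosDef.inner_toEuclideanLin_pos {d : ℕ} {A : Matrix (Fin d) (Fin d) ℝ}
    (hA : A.PosDef) {x : EuclideanSpace ℝ (Fin d)} (hx : x ≠ 0) :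
    0 < ⟪x, A.toEuclideanLin x⟫ := by
  have h := hA.dotProduct_mulVec_pos (x := WithLp.ofLp x) (by simpa using hx)
  simpa [EuclideanSpace.inner_eq_star_dotProduct, dotProduct_comm] using h

/-- Strict positivity and finiteness of the effective temperature
λ_β = (n_β·E_β − |p_β|²)/(n_β·B_β − A_β·p_β) for a multivariate Gaussian
distribution and a continuous, bounded, strictly positive weight β. -/
theorem stmt12 (d : ℕ) (hd : 1 ≤ d)
    (S : Matrix (Fin d) (Fin d) ℝ) (hS : S.PosDef)
    (u : EuclideanSpace ℝ (Fin d)) (C : ℝ) (hC : 0 < C)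
    (f : EuclideanSpace ℝ (Fin d) → ℝ)
    (hf : ∀ v, f v =
      C * Real.exp (-(1 / 2) * ⟪v - u, Matrix.toEuclideanLin S⁻¹ (v - u)⟫))
    (β : EuclideanSpace ℝ (Fin d) → ℝ)
    (hβc : Continuous β) (hβb : ∃ M, ∀ v, |β v| ≤ M) (hβpos : ∀ v, 0 < β v)
    (nβ Eβ Bβ : ℝ) (Aβ pβ : EuclideanSpace ℝ (Fin d))
    (hn : nβ = ∫ v, β v * f v)
    (hp : pβ = ∫ v, (β v * f v) • v)
    (hE : Eβ = ∫ v, ‖v‖ ^ 2 * (β v * f v))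
    (hA : Aβ = -∫ v, β v • gradient f v)
    (hB : Bβ = -∫ v, β v * ⟪v, gradient f v⟫)
    (lβ : ℝ) (hl : lβ = (nβ * Eβ - ‖pβ‖ ^ 2) / (nβ * Bβ - ⟪Aβ, pβ⟫)) :
    0 < lβ := by
  set T : EuclideanSpace ℝ (Fin d) →L[ℝ] EuclideanSpace ℝ (Fin d) :=
    LinearMap.toContinuousLinearMap (Matrix.toEuclideanLin S⁻¹)
  have hTpos : ∀ x ≠ 0, 0 < ⟪x, T x⟫ := fun x hx => hS.inv.inner_toEuclideanLin_pos hx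
  have hTsymm : (T : EuclideanSpace ℝ (Fin d) →ₗ[ℝ] EuclideanSpace ℝ (Fin d)).IsSymmetric :=
    Matrix.isSymmetric_toEuclideanLin_iff.2 hS.1.inv
  have hgrad : ∀ v, gradient f v = -f v • T (v - u) := fun v =>
    (hasGradientAt_of_eq_mul_exp_neg_half_inner hTsymm hf v).gradient
  have hρ : Integrable fun v => β v * f v := by
    simpa using integrable_mul_smul_of_eq_mul_exp_neg_half_inner hTpos hf hβc hβb
      (continuous_const (y := (1 : ℝ))) fun v => by rw [norm_one]; nlinarith [norm_nonneg v]
  have hρv : Integrable fun v => (β v * f v) • v :=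
    integrable_mul_smul_of_eq_mul_exp_neg_half_inner hTpos hf hβc hβb continuous_id
      fun v => by nlinarith [norm_nonneg v]
  have hρE : Integrable fun v => β v * f v * ‖v‖ ^ 2 :=
    integrable_mul_smul_of_eq_mul_exp_neg_half_inner hTpos hf hβc hβb (by fun_prop)
      fun v => by rw [norm_pow, norm_norm]; nlinarith [norm_nonneg v]
  have : Nonempty (Fin d) := ⟨⟨0, hd⟩⟩
  subst hn hp hE hA hB hl
  rw [neg_integral_smul_gradient_eq hgrad, neg_integral_mul_inner_gradient_eq hgrad]
  exact moment_ratio_pos hρ hρv hρE (fun v => mul_pos (hβpos v) (by rw [hf]; positivity))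
    hTpos u
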